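/- arXiv:1306.2492 — 2 statements merged into one kernel-verified Lean document; each statement's English description precedes it below -/
import Mathlib

section
/- Let a, b be real numbers and n a nonnegative integer such that (a+b−n+1/2)_k ≠ 0 for all 0 ≤ k ≤ ⌊n/2⌋. Then the function y(x) = A_n^{(a,b)}(x) satisfies, for all real x, the differential equation x²(x²+1) y''(x) − 2x((a+b−1)x² + a) y'(x) + (n(2a+2b−(n+1)) x² + (1−(−1)^n) a) y(x) = 0. -/
/-!
The operator `L = x²(x²+1) D² - 2x(αx²+β) D + (γx²+δ)` maps `x^m` to
`P(m) x^(m+2) + Q(m) x^m`, with `P = indicial α γ` and `Q = indicial β δ` quadratic in `m`.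
Applied to `A_n = ∑ c_k x^(n-2k)`, the term `x^(n-2k)` collects `c_(k+1) P(n-2k-2) + c_k Q(n-2k)`,
which vanishes by the ratio `c_(k+1)/c_k` of the hypergeometric coefficients; the two leftover
terms vanish because `P(n) = 0` and `Q(n - 2⌊n/2⌋) = 0`.
-/

open Real Finset

noncomputable section

/-- Pochhammer symbol `(r)_k = r (r+1) ⋯ (r+k-1)`. -/
def poch (r : ℝ) (k : ℕ) : ℝ := ∏ i ∈ Finset.range k, (r + i)

/-- The monic polynomial `A_n^{(a,b)}(x)`. -/
def A (a b : ℝ) (n : ℕ) (x : ℝ) : ℝ :=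
  ∑ k ∈ Finset.range (n / 2 + 1),
    poch (-(n / 2 : ℕ) : ℝ) k * poch (a + 1/2 - ((n + 1) / 2 : ℕ)) k * (-1) ^ k /
      (poch (a + b - n + 1/2) k * (Nat.factorial k)) * x ^ (n - 2 * k)

theorem iteratedDeriv_sum_monomials {𝕜 ι : Type*} [NontriviallyNormedField 𝕜] (k : ℕ)
    (s : Finset ι) (c : ι → 𝕜) (e : ι → ℕ) (x : 𝕜) :
    iteratedDeriv k (fun y ↦ ∑ i ∈ s, c i * y ^ e i) x =
      ∑ i ∈ s, c i * ((e i).descFactorial k * x ^ (e i - k)) := by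
  have hsmooth : ∀ i ∈ s, ContDiffAt 𝕜 k (fun y ↦ c i * y ^ e i) x := fun i _ ↦ by fun_prop
  rw [iteratedDeriv_eq_iteratedFDeriv, iteratedFDeriv_fun_sum_apply hsmooth, _root_.sum_apply]
  simp only [← iteratedDeriv_eq_iteratedFDeriv, iteratedDeriv_const_mul_field, iteratedDeriv_pow]

def indicial {R : Type*} [CommRing R] (α γ t : R) : R := t * (t - 1) - 2 * α * t + γ

theorem ode_pow_eq_indicial {R : Type*} [CommRing R] (α β γ δ x : R) (m : ℕ) :
    x ^ 2 * (x ^ 2 + 1) * (m.descFactorial 2 * x ^ (m - 2))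
      - 2 * x * (α * x ^ 2 + β) * (m.descFactorial 1 * x ^ (m - 1))
      + (γ * x ^ 2 + δ) * x ^ m
      = indicial α γ m * x ^ (m + 2) + indicial β δ m * x ^ m := by
  obtain _ | _ | m := m
  · simp [indicial]
  · simp only [indicial, Nat.descFactorial_one]
    ring
  · simp only [indicial, Nat.cast_descFactorial_two, Nat.descFactorial_one, Nat.add_sub_cancel]
    push_cast
    ring

theorem ode_sum_monomials_eq {𝕜 ι : Type*} [NontriviallyNormedField 𝕜] (α β γ δ : 𝕜)
    (s : Finset ι) (c : ι → 𝕜) (e : ι → ℕ) (f : 𝕜 → 𝕜) (hf : f = fun y ↦ ∑ i ∈ s, c i * y ^ e i)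
    (x : 𝕜) :
    x ^ 2 * (x ^ 2 + 1) * iteratedDeriv 2 f x - 2 * x * (α * x ^ 2 + β) * deriv f x
      + (γ * x ^ 2 + δ) * f x =
      ∑ i ∈ s, (c i * (indicial α γ (e i) * x ^ (e i + 2)) +
        c i * (indicial β δ (e i) * x ^ e i)) := by
  rw [← iteratedDeriv_one, hf, iteratedDeriv_sum_monomials, iteratedDeriv_sum_monomials,
    mul_sum, mul_sum, mul_sum, ← sum_sub_distrib, ← sum_add_distrib]
  refine sum_congr rfl fun i _ ↦ ?_
  rw [← mul_add, ← ode_pow_eq_indicial]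
  ring

theorem sum_range_add_eq_zero_of_shift_cancel {M : Type*} [AddCommGroup M] (u v : ℕ → M)
    (N : ℕ) (hu : u 0 = 0) (hv : v N = 0) (h : ∀ k < N, u (k + 1) + v k = 0) :
    ∑ k ∈ range (N + 1), (u k + v k) = 0 := by
  rw [sum_add_distrib, sum_range_succ' u, sum_range_succ v, hu, hv, add_zero, add_zero,
    ← sum_add_distrib]
  exact sum_eq_zero fun k hk ↦ h k (mem_range.mp hk)

theorem poch_succ (r : ℝ) (k : ℕ) : poch r (k + 1) = poch r k * (r + k) :=
  prod_range_succ _ _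

def hypergeomCoeff (p q r : ℝ) (k : ℕ) : ℝ :=
  poch p k * poch q k * (-1) ^ k / (poch r k * k.factorial)

theorem hypergeomCoeff_succ_mul (p q r : ℝ) (k : ℕ) (h : poch r (k + 1) ≠ 0) :
    hypergeomCoeff p q r (k + 1) * ((k + 1) * (r + k)) =
      -hypergeomCoeff p q r k * ((p + k) * (q + k)) := by
  rw [poch_succ, mul_ne_zero_iff] at h
  simp only [hypergeomCoeff, poch_succ, pow_succ, Nat.factorial_succ]
  push_cast
  field_simp [h.1, h.2]

theorem A_eq_sum (a b : ℝ) (n : ℕ) :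
    A a b n = fun x ↦ ∑ k ∈ range (n / 2 + 1),
      hypergeomCoeff (-(n / 2 : ℕ)) (a + 1/2 - ((n + 1) / 2 : ℕ)) (a + b - n + 1/2) k *
        x ^ (n - 2 * k) :=
  rfl

theorem indicial_lead_at_sub_two_mul (a b : ℝ) (n j : ℕ) (hj : 2 * j ≤ n) :
    indicial (a + b - 1) (n * (2 * a + 2 * b - (n + 1))) ((n - 2 * j : ℕ) : ℝ) =
      4 * j * (a + b - n - 1/2 + j) := by
  rw [indicial, Nat.cast_sub hj]
  push_cast
  ring

theorem indicial_trail_at_sub_two_mul (a : ℝ) (n k : ℕ) (hk : k ≤ n / 2) :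
    indicial a ((1 - (-1) ^ n) * a) ((n - 2 * k : ℕ) : ℝ) =
      -4 * ((n / 2 : ℕ) - k) * (a + 1/2 - ((n + 1) / 2 : ℕ) + k) := by
  obtain ⟨N, rfl | rfl⟩ := Nat.even_or_odd' n
  · rw [show 2 * N / 2 = N by omega, show (2 * N + 1) / 2 = N by omega, indicial,
      Nat.cast_sub (by omega), pow_mul]
    push_cast
    ring
  · rw [show (2 * N + 1) / 2 = N by omega, show (2 * N + 1 + 1) / 2 = N + 1 by omega, indicial,
      Nat.cast_sub (by omega), pow_succ, pow_mul]
    push_cast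
    ring

theorem ode_A (a b : ℝ) (n : ℕ)
    (h : ∀ k ≤ n / 2, poch (a + b - n + 1/2) k ≠ 0) (x : ℝ) :
    x ^ 2 * (x ^ 2 + 1) * iteratedDeriv 2 (A a b n) x
      - 2 * x * ((a + b - 1) * x ^ 2 + a) * deriv (A a b n) x
      + ((n : ℝ) * (2 * a + 2 * b - ((n : ℝ) + 1)) * x ^ 2 + (1 - (-1) ^ n) * a) * A a b n x
      = 0 := by
  rw [ode_sum_monomials_eq _ _ _ _ _ _ _ _ (A_eq_sum a b n)]
  apply sum_range_add_eq_zero_of_shift_cancel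
  · rw [indicial_lead_at_sub_two_mul a b n 0 (by omega)]
    simp
  · rw [indicial_trail_at_sub_two_mul a n _ le_rfl]
    simp
  · intro k hk
    have hrec := hypergeomCoeff_succ_mul (-(n / 2 : ℕ)) (a + 1/2 - ((n + 1) / 2 : ℕ))
      (a + b - n + 1/2) k (h (k + 1) (by omega))
    rw [indicial_lead_at_sub_two_mul a b n (k + 1) (by omega), indicial_trail_at_sub_two_mul a n k (by omega),
      show n - 2 * (k + 1) + 2 = n - 2 * k by omega]
    push_cast
    linear_combination (4 * x ^ (n - 2 * k)) * hrec
end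
end

section
/- Let a, b be real numbers with a < 1/2 and a + b > 1/2. Then ∫_{−∞}^{∞} |x|^{−2a} (1+x²)^{−b} dx = Γ(b+a−1/2) Γ(1/2−a) / Γ(b). -/
open MeasureTheory Real Set

/-!
The integrand is even, so the integral is twice the one over `(0, ∞)`. The substitution
`t = x ^ 2` turns that into `∫₀^∞ t ^ (u - 1) * (1 + t) ^ (-(u + v))` with `u = 1/2 - a` and
`v = b + a - 1/2`, and `t = x / (1 - x)` turns this into Euler's Beta integral
`B(u, v) = Γ(u) Γ(v) / Γ(u + v)`.
The change-of-variables formulas used hold without integrability hypotheses (both sides are `0`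
otherwise), so integrability is never proved separately.
-/

theorem integral_rpow_mul_one_sub_rpow {u v : ℝ} (hu : 0 < u) (hv : 0 < v) :
    ∫ x in (0 : ℝ)..1, x ^ (u - 1) * (1 - x) ^ (v - 1) =
      Gamma u * Gamma v / Gamma (u + v) := by
  apply Complex.ofReal_injective
  rw [← intervalIntegral.integral_ofReal]
  push_cast [← Complex.Gamma_ofReal]
  rw [← Complex.betaIntegral_eq_Gamma_mul_div _ _ (by simpa) (by simpa)]
  refine intervalIntegral.integral_congr fun x hx => ?_
  rw [uIcc_of_le zero_le_one] at hx
  simp only [Complex.ofReal_cpow hx.1, Complex.ofReal_cpow (sub_nonneg.2 hx.2)]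
  push_cast
  ring

lemma image_div_one_sub_Ioo : (fun x : ℝ => x / (1 - x)) '' Ioo 0 1 = Ioi 0 := by
  ext t
  constructor
  · rintro ⟨x, ⟨hx0, hx1⟩, rfl⟩
    exact div_pos hx0 (sub_pos.2 hx1)
  · intro (ht : 0 < t)
    refine ⟨t / (1 + t), ⟨by positivity, (div_lt_one (by positivity)).2 (by linarith)⟩, ?_⟩
    field_simp
    ring

lemma injOn_div_one_sub : InjOn (fun x : ℝ => x / (1 - x)) (Ioo 0 1) := by
  intro x ⟨_, hx⟩ y ⟨_, hy⟩ h
  have : 1 - x ≠ 0 := (sub_pos.2 hx).ne'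
  have : 1 - y ≠ 0 := (sub_pos.2 hy).ne'
  field_simp at h
  linarith

lemma hasDerivAt_div_one_sub {x : ℝ} (hx : x ≠ 1) :
    HasDerivAt (fun x : ℝ => x / (1 - x)) (1 / (1 - x) ^ 2) x := by
  have h := (hasDerivAt_id' x).div ((hasDerivAt_id' x).const_sub 1) (sub_ne_zero.2 hx.symm)
  exact h.congr_deriv (by ring)

lemma abs_deriv_mul_rpow_div_one_sub {x : ℝ} (hx : x ∈ Ioo (0 : ℝ) 1) (u v : ℝ) :
    |1 / (1 - x) ^ 2| * ((x / (1 - x)) ^ (u - 1) * (1 + x / (1 - x)) ^ (-(u + v))) =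
      x ^ (u - 1) * (1 - x) ^ (v - 1) := by
  have h1x : 0 < 1 - x := sub_pos.2 hx.2
  have h_add : 1 + x / (1 - x) = (1 - x)⁻¹ := by field_simp; ring
  have h_sq : 1 / (1 - x) ^ 2 = (1 - x) ^ (-2 : ℝ) := by
    rw [rpow_neg h1x.le, one_div, ← rpow_natCast]; norm_num
  rw [abs_of_pos (by positivity), h_add, h_sq, div_rpow hx.1.le h1x.le, inv_rpow h1x.le,
    ← rpow_neg h1x.le, neg_neg, div_eq_mul_inv, ← rpow_neg h1x.le]
  calc (1 - x) ^ (-2 : ℝ) * (x ^ (u - 1) * (1 - x) ^ (-(u - 1)) * (1 - x) ^ (u + v))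
      = x ^ (u - 1) * ((1 - x) ^ (-2 : ℝ) * (1 - x) ^ (-(u - 1)) * (1 - x) ^ (u + v)) := by ring
    _ = x ^ (u - 1) * (1 - x) ^ (v - 1) := by
      rw [← rpow_add h1x, ← rpow_add h1x]; ring_nf

theorem integral_Ioi_rpow_mul_one_add_rpow_neg {u v : ℝ} (hu : 0 < u) (hv : 0 < v) :
    ∫ t in Ioi (0 : ℝ), t ^ (u - 1) * (1 + t) ^ (-(u + v)) =
      Gamma u * Gamma v / Gamma (u + v) := by
  rw [← image_div_one_sub_Ioo, integral_image_eq_integral_abs_deriv_smul measurableSet_Ioo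
      (fun x hx => (hasDerivAt_div_one_sub hx.2.ne).hasDerivWithinAt) injOn_div_one_sub,
    setIntegral_congr_fun measurableSet_Ioo fun x hx =>
      (smul_eq_mul _ _).trans (abs_deriv_mul_rpow_div_one_sub hx u v),
    ← integral_Ioc_eq_integral_Ioo, ← intervalIntegral.integral_of_le zero_le_one]
  exact integral_rpow_mul_one_sub_rpow hu hv

theorem integral_Ioi_rpow_mul_one_add_rpow_rpow_neg {p u v : ℝ} (hp : 0 < p) (hu : 0 < u)
    (hv : 0 < v) :
    ∫ x in Ioi (0 : ℝ), x ^ (p * u - 1) * (1 + x ^ p) ^ (-(u + v)) =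
      Gamma u * Gamma v / (p * Gamma (u + v)) := by
  have h_subst := integral_comp_rpow_Ioi_of_pos hp
    (g := fun t : ℝ => t ^ (u - 1) * (1 + t) ^ (-(u + v)))
  rw [integral_Ioi_rpow_mul_one_add_rpow_neg hu hv] at h_subst
  have h_pt : ∀ x ∈ Ioi (0 : ℝ),
      (p * x ^ (p - 1)) • ((x ^ p) ^ (u - 1) * (1 + x ^ p) ^ (-(u + v))) =
        p * (x ^ (p * u - 1) * (1 + x ^ p) ^ (-(u + v))) := by
    intro x (hx : 0 < x)
    rw [smul_eq_mul, ← rpow_mul hx.le, mul_assoc, ← mul_assoc (x ^ (p - 1)), ← rpow_add hx]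
    ring_nf
  rw [setIntegral_congr_fun measurableSet_Ioi h_pt, integral_const_mul] at h_subst
  rw [eq_div_iff (Gamma_pos_of_pos (add_pos hu hv)).ne'] at h_subst
  rw [eq_div_iff (by positivity), ← h_subst]
  ring

theorem beta_type_integral (a b : ℝ) (ha : a < 1/2) (hab : 1/2 < a + b) :
    ∫ x : ℝ, |x| ^ (-2 * a) * (1 + x ^ 2) ^ (-b) =
      Real.Gamma (b + a - 1/2) * Real.Gamma (1/2 - a) / Real.Gamma b := by
  have h_half := integral_Ioi_rpow_mul_one_add_rpow_rpow_neg two_pos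
    (show 0 < 1/2 - a by linarith) (show 0 < b + a - 1/2 by linarith)
  rw [show 2 * (1/2 - a) - 1 = -2 * a by ring, show 1/2 - a + (b + a - 1/2) = b by ring] at h_half
  simp only [rpow_two] at h_half
  calc ∫ x : ℝ, |x| ^ (-2 * a) * (1 + x ^ 2) ^ (-b)
      = 2 * ∫ x in Ioi 0, x ^ (-2 * a) * (1 + x ^ 2) ^ (-b) := by
        rw [← integral_comp_abs (f := fun x => x ^ (-2 * a) * (1 + x ^ 2) ^ (-b))]
        simp only [sq_abs]
    _ = Real.Gamma (b + a - 1/2) * Real.Gamma (1/2 - a) / Real.Gamma b := by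
        rw [h_half]
        field_simp
end
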